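/- Let $X$ be a metric space with bounded geometry and let $\phi: C^*_u(X)^n \to \mathcal{B}(\ell^2(X))$ be a bounded $n$-multilinear $\ell^\infty(X)$-multimodular map. Then the image of $\phi$ is contained in $C^*_u(X)$. -/

import Mathlib

/- Common setup: `ℓ²(X)`, matrix entries, propagation, approximation,
and the uniform Roe algebra as a set of bounded operators. -/

noncomputable section
open scoped InnerProductSpace
open Function

/-- `ℓ²(X)` with complex coefficients. -/
abbrev H2 (X : Type*) := lp (fun _ : X => ℂ) 2

/-- The canonical basis vector `δ_x` of `ℓ²(X)`. -/
def deltaV (X : Type*) (x : X) : H2 X :=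
  haveI := Classical.decEq X
  lp.single 2 x 1

/-- The matrix entry `a_{xy} = ⟪δ_x, a δ_y⟫` of a bounded operator on `ℓ²(X)`. -/
def entry {X : Type*} (a : H2 X →L[ℂ] H2 X) (x y : X) : ℂ :=
  ⟪deltaV X x, a (deltaV X y)⟫_ℂ

/-- `a` has propagation at most `r`. -/
def HasPropLE {X : Type*} [MetricSpace X] (a : H2 X →L[ℂ] H2 X) (r : ℝ) : Prop :=
  ∀ x y : X, dist x y > r → entry a x y = 0

/-- `a` can be `ε`-`r`-approximated: there is `b` of propagation at most `r`
with `‖a - b‖ ≤ ε`. -/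
def IsApprox {X : Type*} [MetricSpace X] (a : H2 X →L[ℂ] H2 X) (ε r : ℝ) : Prop :=
  ∃ b : H2 X →L[ℂ] H2 X, HasPropLE b r ∧ ‖a - b‖ ≤ ε

/-- The uniform Roe algebra of `X`, as the norm closure of the finite
propagation operators in `B(ℓ²(X))`. -/
def roeSet (X : Type*) [MetricSpace X] : Set (H2 X →L[ℂ] H2 X) :=
  closure {a | ∃ r : ℝ, HasPropLE a r}

/-- A bounded operator on `ℓ²(X)` is diagonal precisely when it is
multiplication by a function in `ℓ^∞(X)`. -/
def IsDiagonalOp {X : Type*} (d : H2 X →L[ℂ] H2 X) : Prop :=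
  ∀ x y : X, x ≠ y → entry d x y = 0

/-- `X` has bounded geometry: the cardinalities of `r`-balls are uniformly
finite for each `r`. -/
def BoundedGeometry (X : Type*) [MetricSpace X] : Prop :=
  ∀ r : ℝ, ∃ N : ℕ, ∀ x : X,
    (Metric.closedBall x r).Finite ∧ (Metric.closedBall x r).ncard ≤ N

/-- `φ` is `ℓ^∞(X)`-multimodular (on the uniform Roe algebra): for every
diagonal operator `d` (i.e. every multiplication operator by a function in
`ℓ^∞(X)`), `d` can be moved in and out of `φ` and across adjacent arguments. -/
def IsLinftyMultimodular {X : Type*} [MetricSpace X] (n : ℕ)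
    (φ : (Fin (n + 1) → (H2 X →L[ℂ] H2 X)) → (H2 X →L[ℂ] H2 X)) : Prop :=
  ∀ d : H2 X →L[ℂ] H2 X, IsDiagonalOp d →
    ∀ a : Fin (n + 1) → (H2 X →L[ℂ] H2 X), (∀ i, a i ∈ roeSet X) →
      (d * φ a = φ (Function.update a 0 (d * a 0)))
      ∧ (∀ (j : Fin (n + 1)) (h : (j : ℕ) + 1 < n + 1),
          φ (Function.update a j (a j * d))
            = φ (Function.update a ⟨(j : ℕ) + 1, h⟩ (d * a ⟨(j : ℕ) + 1, h⟩)))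
      ∧ (φ (Function.update a (Fin.last n) (a (Fin.last n) * d)) = φ a * d)

/-- `φ` is a bounded multilinear map on the uniform Roe algebra. -/
def IsBddMultilinearOnRoe {X : Type*} [MetricSpace X] (n : ℕ)
    (φ : (Fin n → (H2 X →L[ℂ] H2 X)) → (H2 X →L[ℂ] H2 X)) : Prop :=
  (∃ C : ℝ, ∀ a : Fin n → (H2 X →L[ℂ] H2 X), (∀ i, a i ∈ roeSet X) →
      ‖φ a‖ ≤ C * ∏ i, ‖a i‖)
  ∧ (∀ (a : Fin n → (H2 X →L[ℂ] H2 X)), (∀ i, a i ∈ roeSet X) →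
      ∀ (i : Fin n), ∀ x y : H2 X →L[ℂ] H2 X, x ∈ roeSet X → y ∈ roeSet X →
        φ (Function.update a i (x + y))
          = φ (Function.update a i x) + φ (Function.update a i y))
  ∧ (∀ (a : Fin n → (H2 X →L[ℂ] H2 X)), (∀ i, a i ∈ roeSet X) →
      ∀ (i : Fin n), ∀ (c : ℂ) (x : H2 X →L[ℂ] H2 X), x ∈ roeSet X →
        φ (Function.update a i (c • x)) = c • φ (Function.update a i x))

/-
If every `b i` has propagation at most `r`, let `P k` be the projection onto the ball
`B(y, k r)`. Finite propagation gives `P (k + 1) * (b i * P k) = b i * P k`, so multimodularity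
moves `P 0` from the right of `φ b` leftwards through the arguments, one ball-enlargement per
argument, until it comes out on the left as `P (n + 1)`: `P (n + 1) * (φ b * P 0) = φ b * P 0`.
Reading off the `(x, y)` entry shows that `φ b` has propagation at most `(n + 1) r`.
The norm bound makes `φ` a continuous multilinear map on `C*_u(X)`, in whose power the
finite-propagation tuples are dense, so `φ` maps `C*_u(X)ⁿ⁺¹` into the closure of the
finite-propagation operators.
-/

section

variable {X : Type*}

theorem inner_deltaV_left (x : X) (v : H2 X) : ⟪deltaV X x, v⟫_ℂ = v x := by
  classical
  simp [deltaV, lp.inner_single_left]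

theorem deltaV_apply_of_ne {x z : X} (h : z ≠ x) : deltaV X x z = 0 := by
  classical
  simp [deltaV, h]

theorem apply_deltaV_apply (a : H2 X →L[ℂ] H2 X) (x y : X) :
    a (deltaV X y) x = entry a x y :=
  (inner_deltaV_left x _).symm

theorem hasSum_smul_deltaV (v : H2 X) : HasSum (fun y => v y • deltaV X y) v := by
  classical
  convert lp.hasSum_single (p := 2) ENNReal.ofNat_ne_top v using 2 with y
  rw [deltaV, ← lp.single_smul, smul_eq_mul, mul_one]

theorem ContinuousLinearMap.ext_entry {a b : H2 X →L[ℂ] H2 X}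
    (h : ∀ x y, entry a x y = entry b x y) : a = b := by
  have hδ : ∀ y, a (deltaV X y) = b (deltaV X y) := fun y =>
    lp.ext <| funext fun x => by rw [apply_deltaV_apply, apply_deltaV_apply, h]
  ext1 v
  refine ((hasSum_smul_deltaV v).mapL a).unique ?_
  simpa only [map_smul, hδ] using (hasSum_smul_deltaV v).mapL b

def indicatorOp (S : Set X) : H2 X →L[ℂ] H2 X :=
  LinearMap.mkContinuous
    { toFun := fun v =>
        ⟨S.indicator v, (lp.memℓp v).mono' fun _ => norm_indicator_le_norm_self _ _⟩
      map_add' := fun v w => lp.ext (S.indicator_add v w)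
      map_smul' := fun c v => lp.ext (S.indicator_const_smul c v) }
    1 fun v => by
      rw [one_mul]
      exact lp.norm_mono two_ne_zero fun _ => norm_indicator_le_norm_self _ _

theorem indicatorOp_apply (S : Set X) (v : H2 X) (x : X) :
    indicatorOp S v x = S.indicator (fun z => v z) x := rfl

theorem entry_indicatorOp_mul (S : Set X) (a : H2 X →L[ℂ] H2 X) (x y : X) :
    entry (indicatorOp S * a) x y = S.indicator (1 : X → ℂ) x * entry a x y := by
  rw [entry, mul_apply_eq_comp, inner_deltaV_left, indicatorOp_apply]
  by_cases hx : x ∈ S <;> simp [hx, apply_deltaV_apply]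

theorem indicatorOp_deltaV (S : Set X) (y : X) :
    indicatorOp S (deltaV X y) = S.indicator (1 : X → ℂ) y • deltaV X y := by
  refine lp.ext <| funext fun z => ?_
  simp only [indicatorOp_apply, lp.coeFn_smul, Pi.smul_apply]
  by_cases hz : z = y
  · subst hz; by_cases hy : z ∈ S <;> simp [hy]
  · simp [deltaV_apply_of_ne hz]

theorem entry_mul_indicatorOp (a : H2 X →L[ℂ] H2 X) (S : Set X) (x y : X) :
    entry (a * indicatorOp S) x y = S.indicator (1 : X → ℂ) y * entry a x y := by
  rw [entry, mul_apply_eq_comp, indicatorOp_deltaV, map_smul, inner_smul_right, entry]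

theorem isDiagonalOp_indicatorOp (S : Set X) : IsDiagonalOp (indicatorOp S) := by
  intro x y hxy
  rw [entry, indicatorOp_deltaV, inner_smul_right, inner_deltaV_left, deltaV_apply_of_ne hxy,
    mul_zero]

section Propagation

variable [MetricSpace X]

theorem HasPropLE.mono {a : H2 X →L[ℂ] H2 X} {r s : ℝ} (h : HasPropLE a r) (hrs : r ≤ s) :
    HasPropLE a s :=
  fun x y hxy => h x y (hrs.trans_lt hxy)

theorem HasPropLE.mul_indicatorOp {a : H2 X →L[ℂ] H2 X} {r : ℝ} (h : HasPropLE a r)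
    (S : Set X) : HasPropLE (a * indicatorOp S) r :=
  fun x y hxy => by rw [entry_mul_indicatorOp, h x y hxy, mul_zero]

theorem exists_hasPropLE_forall {ι : Type*} [Finite ι] {a : ι → H2 X →L[ℂ] H2 X}
    (h : ∀ i, ∃ r, HasPropLE (a i) r) : ∃ r, ∀ i, HasPropLE (a i) r := by
  choose r hr using h
  obtain ⟨R, hR⟩ := Finite.exists_le r
  exact ⟨R, fun i => (hr i).mono (hR i)⟩

variable (X) in
def finPropSubmodule : Submodule ℂ (H2 X →L[ℂ] H2 X) where
  carrier := {a | ∃ r, HasPropLE a r}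
  add_mem' := by
    rintro a b ⟨r, hr⟩ ⟨s, hs⟩
    refine ⟨max r s, fun x y hxy => ?_⟩
    simp only [entry, add_apply, inner_add_right]
    rw [← entry, ← entry, (hr.mono (le_max_left r s)) x y hxy,
      (hs.mono (le_max_right r s)) x y hxy, add_zero]
  zero_mem' := ⟨0, fun x y _ => by simp [entry]⟩
  smul_mem' := by
    rintro c a ⟨r, hr⟩
    refine ⟨r, fun x y hxy => ?_⟩
    simp only [entry, smul_apply, inner_smul_right]
    rw [← entry, hr x y hxy, mul_zero]

theorem mem_roeSet_iff {a : H2 X →L[ℂ] H2 X} :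
    a ∈ roeSet X ↔ a ∈ (finPropSubmodule X).topologicalClosure := by
  rw [← SetLike.mem_coe, Submodule.topologicalClosure_coe]
  rfl

theorem HasPropLE.mem_roeSet {a : H2 X →L[ℂ] H2 X} {r : ℝ} (h : HasPropLE a r) :
    a ∈ roeSet X :=
  subset_closure ⟨r, h⟩

theorem indicatorOp_closedBall_mul_mul_indicatorOp {c : H2 X →L[ℂ] H2 X} {r : ℝ}
    (hc : HasPropLE c r) (y : X) (s : ℝ) :
    indicatorOp (Metric.closedBall y (s + r)) * (c * indicatorOp (Metric.closedBall y s))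
      = c * indicatorOp (Metric.closedBall y s) := by
  refine ContinuousLinearMap.ext_entry fun u w => ?_
  rw [entry_indicatorOp_mul, entry_mul_indicatorOp]
  by_cases hu : u ∈ Metric.closedBall y (s + r)
  · simp [hu]
  by_cases hw : w ∈ Metric.closedBall y s
  · have : r < dist u w := by
      rw [Metric.mem_closedBall] at hu hw
      linarith [dist_triangle u w y]
    simp [hc u w this]
  · simp [hw]

end Propagation

section MulRightTail

variable {n : ℕ}

/-- The tuple `b` with each of its last `m` entries `b i` replaced by `b i * p (n - i)`. -/
def mulRightTail (b : Fin (n + 1) → (H2 X →L[ℂ] H2 X)) (p : ℕ → H2 X →L[ℂ] H2 X) (m : ℕ) :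
    Fin (n + 1) → (H2 X →L[ℂ] H2 X) :=
  fun i => if n < i + m then b i * p (n - i) else b i

variable (b : Fin (n + 1) → (H2 X →L[ℂ] H2 X)) (p : ℕ → H2 X →L[ℂ] H2 X)

theorem mulRightTail_one :
    mulRightTail b p 1 = update b (Fin.last n) (b (Fin.last n) * p 0) := by
  funext i
  rcases eq_or_ne i (Fin.last n) with rfl | hi
  · simp [mulRightTail]
  · have : (i : ℕ) < n := Fin.val_lt_last hi
    simp [mulRightTail, hi, show ¬ n < i + 1 by omega]

theorem mulRightTail_succ_succ {k : ℕ} (hk : k < n) :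
    mulRightTail b p (k + 2) = update (mulRightTail b p (k + 1)) ⟨n - (k + 1), by omega⟩
      (mulRightTail b p (k + 1) ⟨n - (k + 1), by omega⟩ * p (k + 1)) := by
  funext i
  rcases eq_or_ne i ⟨n - (k + 1), by omega⟩ with rfl | hi
  · simp [mulRightTail, show ¬ n < n - (k + 1) + (k + 1) by omega,
      show n < n - (k + 1) + (k + 2) by omega, show n - (n - (k + 1)) = k + 1 by omega]
  · have : (i : ℕ) ≠ n - (k + 1) := fun h => hi (Fin.ext h)
    simp only [mulRightTail, update_of_ne hi, show n < i + (k + 2) ↔ n < i + (k + 1) by omega]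

theorem mulRightTail_apply {m : ℕ} {i : Fin (n + 1)} (hi : n < i + m) :
    mulRightTail b p m i = b i * p (n - i) :=
  if_pos hi

theorem mulRightTail_mem_roeSet [MetricSpace X] (hb : ∀ i, b i ∈ roeSet X)
    (hbp : ∀ i k, b i * p k ∈ roeSet X) (m : ℕ) (i : Fin (n + 1)) :
    mulRightTail b p m i ∈ roeSet X := by
  unfold mulRightTail
  split_ifs
  exacts [hbp i _, hb i]

end MulRightTail

namespace IsLinftyMultimodular

variable [MetricSpace X] {n : ℕ} {φ : (Fin (n + 1) → (H2 X →L[ℂ] H2 X)) → (H2 X →L[ℂ] H2 X)}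
  {b : Fin (n + 1) → (H2 X →L[ℂ] H2 X)} {p : ℕ → H2 X →L[ℂ] H2 X}

theorem apply_mulRightTail (hmod : IsLinftyMultimodular n φ) (hp : ∀ k, IsDiagonalOp (p k))
    (hb : ∀ i, b i ∈ roeSet X) (hbp : ∀ i k, b i * p k ∈ roeSet X)
    (habs : ∀ i k, p (k + 1) * (b i * p k) = b i * p k) {k : ℕ} (hk : k ≤ n) :
    φ (mulRightTail b p (k + 1)) = φ b * p 0 := by
  have hT := mulRightTail_mem_roeSet b p hb hbp
  induction k with
  | zero => rw [mulRightTail_one]; exact (hmod (p 0) (hp 0) b hb).2.2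
  | succ k ih =>
    have hj : n - (k + 1) + 1 < n + 1 := by omega
    have hmid := (hmod (p (k + 1)) (hp _) _ (hT (k + 1))).2.1 ⟨n - (k + 1), by omega⟩ hj
    have hnext : mulRightTail b p (k + 1) ⟨n - (k + 1) + 1, hj⟩
        = b ⟨n - (k + 1) + 1, hj⟩ * p k := by
      rw [mulRightTail_apply _ _ (by simp only; omega)]
      simp only [show n - (n - (k + 1) + 1) = k by omega]
    rw [mulRightTail_succ_succ b p (by omega), hmid, hnext, habs, ← hnext, update_eq_self,
      ih (by omega)]

theorem mul_apply_mul_eq (hmod : IsLinftyMultimodular n φ) (hp : ∀ k, IsDiagonalOp (p k))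
    (hb : ∀ i, b i ∈ roeSet X) (hbp : ∀ i k, b i * p k ∈ roeSet X)
    (habs : ∀ i k, p (k + 1) * (b i * p k) = b i * p k) :
    p (n + 1) * (φ b * p 0) = φ b * p 0 := by
  have hfull := hmod.apply_mulRightTail hp hb hbp habs le_rfl
  have hleft := (hmod (p (n + 1)) (hp _) _ (mulRightTail_mem_roeSet b p hb hbp (n + 1))).1
  have h0 : mulRightTail b p (n + 1) 0 = b 0 * p n := by simp [mulRightTail]
  rwa [h0, habs, ← h0, update_eq_self, hfull] at hleft

theorem hasPropLE_apply (hmod : IsLinftyMultimodular n φ) {r : ℝ}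
    (hb : ∀ i, HasPropLE (b i) r) : HasPropLE (φ b) ((n + 1) * r) := by
  intro x y hxy
  have key := hmod.mul_apply_mul_eq (p := fun k : ℕ => indicatorOp (Metric.closedBall y (k * r)))
    (fun _ => isDiagonalOp_indicatorOp _) (fun i => (hb i).mem_roeSet)
    (fun i _ => ((hb i).mul_indicatorOp _).mem_roeSet) fun i k => by
      simpa only [Nat.cast_succ, add_one_mul] using
        indicatorOp_closedBall_mul_mul_indicatorOp (hb i) y (k * r)
  have hx : x ∉ Metric.closedBall y ((n + 1) * r) := by
    simpa [Metric.mem_closedBall] using hxy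
  simpa [entry_indicatorOp_mul, entry_mul_indicatorOp, hx] using
    (congrArg (entry · x y) key).symm

end IsLinftyMultimodular

theorem IsBddMultilinearOnRoe.continuous_restrict [MetricSpace X] {n : ℕ}
    {φ : (Fin n → (H2 X →L[ℂ] H2 X)) → (H2 X →L[ℂ] H2 X)} (hφ : IsBddMultilinearOnRoe n φ) :
    Continuous fun c : Fin n → (finPropSubmodule X).topologicalClosure => φ fun i => c i := by
  obtain ⟨⟨C, hC⟩, hadd, hsmul⟩ := hφ
  have hmem (c : Fin n → (finPropSubmodule X).topologicalClosure) (i : Fin n) :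
      (c i : H2 X →L[ℂ] H2 X) ∈ roeSet X :=
    mem_roeSet_iff.2 (c i).2
  let Φ : MultilinearMap ℂ (fun _ : Fin n => (finPropSubmodule X).topologicalClosure)
      (H2 X →L[ℂ] H2 X) :=
    { toFun := fun c => φ fun i => c i
      map_update_add' := fun {inst} c i x y => by
        obtain rfl : inst = instDecidableEqFin n := Subsingleton.elim _ _
        simp only [apply_update (fun _ => Subtype.val), Submodule.coe_add]
        exact hadd _ (hmem c) i _ _ (hmem (fun _ => x) i) (hmem (fun _ => y) i)
      map_update_smul' := fun {inst} c i a x => by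
        obtain rfl : inst = instDecidableEqFin n := Subsingleton.elim _ _
        simp only [apply_update (fun _ => Subtype.val), Submodule.coe_smul]
        exact hsmul _ (hmem c) i a _ (hmem (fun _ => x) i) }
  exact (Φ.mkContinuous C fun c => hC _ (hmem c)).cont

end

theorem multimodular_image_in_roe_general
    {X : Type*} [MetricSpace X] (n : ℕ)
    (φ : (Fin (n + 1) → (H2 X →L[ℂ] H2 X)) → (H2 X →L[ℂ] H2 X))
    (hφ : IsBddMultilinearOnRoe (n + 1) φ)
    (hmod : IsLinftyMultimodular n φ) :
    ∀ a : Fin (n + 1) → (H2 X →L[ℂ] H2 X), (∀ i, a i ∈ roeSet X) →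
      φ a ∈ roeSet X := by
  intro a ha
  let finPropTuples : Set (Fin (n + 1) → (finPropSubmodule X).topologicalClosure) :=
    Set.univ.pi fun _ => {c | (c : H2 X →L[ℂ] H2 X) ∈ finPropSubmodule X}
  have hdense : (fun i => ⟨a i, mem_roeSet_iff.1 (ha i)⟩) ∈ closure finPropTuples := by
    rw [closure_pi_set]
    refine fun i _ => closure_subtype.2 (closure_mono (fun c hc => ?_) (ha i))
    exact ⟨⟨c, (finPropSubmodule X).le_topologicalClosure hc⟩, hc, rfl⟩
  have hmaps : Set.MapsTo (fun c => φ fun i => c i) finPropTuples {b | ∃ r, HasPropLE b r} := by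
    intro c hc
    obtain ⟨r, hr⟩ := exists_hasPropLE_forall fun i => hc i trivial
    exact ⟨_, hmod.hasPropLE_apply hr⟩
  exact map_mem_closure (f := fun c => φ fun i => c i) hφ.continuous_restrict hdense hmaps

/-- A bounded multilinear `ℓ^∞(X)`-multimodular map on the uniform Roe algebra
of a bounded geometry space takes its values in the uniform Roe algebra. -/
theorem multimodular_image_in_roe
    {X : Type*} [MetricSpace X] (hX : BoundedGeometry X) (n : ℕ)
    (φ : (Fin (n + 1) → (H2 X →L[ℂ] H2 X)) → (H2 X →L[ℂ] H2 X))
    (hφ : IsBddMultilinearOnRoe (n + 1) φ)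
    (hmod : IsLinftyMultimodular n φ) :
    ∀ a : Fin (n + 1) → (H2 X →L[ℂ] H2 X), (∀ i, a i ∈ roeSet X) →
      φ a ∈ roeSet X :=
  multimodular_image_in_roe_general n φ hφ hmod
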